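/- Let X = ∏_{i=1}^n X_i be a product of n finite intervals of integers, each of cardinality at least 2, let F = (f_1,…,f_n) be a map from X to itself, and let Y be a subinterval of X_1. Define F̃ = (f̃_1,…,f̃_n) : X → X by f̃_i = f_i for i > 1 and f̃_1(x) = min(Y) if f_1(x) < min(Y), f̃_1(x) = f_1(x) if f_1(x) ∈ Y, and f̃_1(x) = max(Y) if f_1(x) > max(Y). If A is an attractor of Γ(F) containing a point z with z_1 ∈ Y, then the set Ā = {x ∈ A : x_1 ∈ Y} is a (nonempty) trap domain of the asynchronous state transition graph Γ(F̃); in particular, A contains an attractor of Γ(F̃). -/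

import Mathlib

/-! Common definitions for discrete dynamical systems on products of
integer intervals, following Richard, "Positive circuits and maximal
number of fixed points in discrete dynamical systems". -/

/-- The state space `X = ∏ i, [a i, b i]` as a subset of `Fin n → ℤ`. -/
def StateSpace {n : ℕ} (a b : Fin n → ℤ) : Set (Fin n → ℤ) :=
  {x | ∀ i, a i ≤ x i ∧ x i ≤ b i}

/-- `v` is a directional vector, i.e. `v ∈ {-1,1}^n`. -/
def IsDir {n : ℕ} (v : Fin n → ℤ) : Prop := ∀ i, v i = 1 ∨ v i = -1

/-- `(x, v) ∈ X'`: `x ∈ X`, `v ∈ {-1,1}^n` and `x + v ∈ X`. -/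
def InX' {n : ℕ} (a b : Fin n → ℤ) (x v : Fin n → ℤ) : Prop :=
  x ∈ StateSpace a b ∧ IsDir v ∧ (x + v) ∈ StateSpace a b

/-- Discrete Jacobian entry `f_ij(x,v) = (f_i(x + v_j e_j) - f_i(x)) / v_j`. -/
def jac {n : ℕ} (F : (Fin n → ℤ) → Fin n → ℤ) (x v : Fin n → ℤ) (i j : Fin n) : ℤ :=
  (F (Function.update x j (x j + v j)) i - F x i) / v j

/-- A signed edge `(j, s, i)`: initial vertex `j`, sign `s`, final vertex `i`. -/
abbrev SEdge (n : ℕ) := Fin n × ℤ × Fin n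

/-- Edge set of the local interaction graph `𝐆_F(x,v)`: a positive
(resp. negative) edge from `j` to `i` iff `f_ij(x,v) > 0` (resp. `< 0`). -/
def localGraph {n : ℕ} (F : (Fin n → ℤ) → Fin n → ℤ) (x v : Fin n → ℤ) :
    Set (SEdge n) :=
  {e | (e.2.1 = 1 ∧ 0 < jac F x v e.2.2 e.1) ∨ (e.2.1 = -1 ∧ jac F x v e.2.2 e.1 < 0)}

/-- `p` and `q` are on both sides of `t`. -/
def BothSides (p q t : ℚ) : Prop := (p < t ∧ t < q) ∨ (q < t ∧ t < p)

/-- Edge set of the local interaction graph with thresholds `G_F(x,v)`: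
an edge `(j,s,i)` of `𝐆_F(x,v)` such that moreover `f_i(x)` and
`f_i(x + v_j e_j)` are on both sides of the threshold `x_i + v_i / 2`. -/
def localGraphT {n : ℕ} (F : (Fin n → ℤ) → Fin n → ℤ) (x v : Fin n → ℤ) :
    Set (SEdge n) :=
  {e | e ∈ localGraph F x v ∧
    BothSides (F x e.2.2) (F (Function.update x e.1 (x e.1 + v e.1)) e.2.2)
      ((x e.2.2 : ℚ) + (v e.2.2 : ℚ) / 2)}

/-- `c` is an (elementary) circuit of the signed graph with edge set `E`:
a nonempty sequence of consecutive edges, closing up, whose initial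
vertices are mutually distinct. -/
def IsCircuit {n : ℕ} (E : Set (SEdge n)) (c : List (SEdge n)) : Prop :=
  c ≠ [] ∧ (∀ e ∈ c, e ∈ E) ∧
  (∀ (k : ℕ) (h : k + 1 < c.length),
    (c.get ⟨k, Nat.lt_of_succ_lt h⟩).2.2 = (c.get ⟨k + 1, h⟩).1) ∧
  (c.getLast?).map (fun e => e.2.2) = (c.head?).map (fun e => e.1) ∧
  (c.map (fun e => e.1)).Nodup

/-- A positive circuit: a circuit whose product of signs is positive. -/
def IsPosCircuit {n : ℕ} (E : Set (SEdge n)) (c : List (SEdge n)) : Prop :=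
  IsCircuit E c ∧ 0 < (c.map (fun e => e.2.1)).prod

/-- The graph `E` has a positive circuit. -/
def HasPosCircuit {n : ℕ} (E : Set (SEdge n)) : Prop := ∃ c, IsPosCircuit E c

/-- Vertex `i` belongs to some positive circuit of `E`. -/
def MemPosCircuit {n : ℕ} (E : Set (SEdge n)) (i : Fin n) : Prop :=
  ∃ c, IsPosCircuit E c ∧ i ∈ c.map (fun e => e.1)

/-- `I` is a positive feedback vertex set of `E`: every positive circuit
of `E` has at least one vertex in `I`. -/
def IsPFVS {n : ℕ} (E : Set (SEdge n)) (I : Finset (Fin n)) : Prop :=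
  ∀ c, IsPosCircuit E c → ∃ i ∈ I, i ∈ c.map (fun e => e.1)

/-- `T_i(G_F)`: the set of real numbers `t` such that `t = x_i + v_i/2` for
some `(x,v) ∈ X'` such that `i` belongs to a positive circuit of `G_F(x,v)`. -/
def Tset {n : ℕ} (a b : Fin n → ℤ) (F : (Fin n → ℤ) → Fin n → ℤ) (i : Fin n) : Set ℝ :=
  {t | ∃ x v, InX' a b x v ∧ t = (x i : ℝ) + (v i : ℝ) / 2 ∧
    MemPosCircuit (localGraphT F x v) i}

/-- Edge set of the global interaction graph `𝐆(F)` (without thresholds). -/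
def globalGraph {n : ℕ} (a b : Fin n → ℤ) (F : (Fin n → ℤ) → Fin n → ℤ) :
    Set (SEdge n) :=
  ⋃ (x : Fin n → ℤ) (v : Fin n → ℤ) (_ : InX' a b x v), localGraph F x v

/-- Edge set of the global interaction graph `G(F)` (with thresholds). -/
def globalGraphT {n : ℕ} (a b : Fin n → ℤ) (F : (Fin n → ℤ) → Fin n → ℤ) :
    Set (SEdge n) :=
  ⋃ (x : Fin n → ℤ) (v : Fin n → ℤ) (_ : InX' a b x v), localGraphT F x v

/-- Edge relation of the asynchronous state transition graph `Γ(F)`. -/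
def Async {n : ℕ} (F : (Fin n → ℤ) → Fin n → ℤ) (x y : Fin n → ℤ) : Prop :=
  ∃ i, F x i ≠ x i ∧ y = Function.update x i (x i + (F x i - x i).sign)

/-- A trap domain of `Γ(F)`: a nonempty subset of `X` closed under the
edges of `Γ(F)`. -/
def IsTrapDomain {n : ℕ} (a b : Fin n → ℤ) (F : (Fin n → ℤ) → Fin n → ℤ)
    (A : Set (Fin n → ℤ)) : Prop :=
  A.Nonempty ∧ A ⊆ StateSpace a b ∧ ∀ x ∈ A, ∀ y, Async F x y → y ∈ A

/-- An attractor of `Γ(F)`: a trap domain minimal for inclusion. -/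
def IsAttractor {n : ℕ} (a b : Fin n → ℤ) (F : (Fin n → ℤ) → Fin n → ℤ)
    (A : Set (Fin n → ℤ)) : Prop :=
  IsTrapDomain a b F A ∧ ∀ B, IsTrapDomain a b F B → B ⊆ A → B = A

/-- The map `F̃` obtained from `F` by clamping the first component into
the subinterval `Y = [c, d]` of `X_1`. -/
def clampFirst {n : ℕ} (i0 : Fin n) (c d : ℤ) (F : (Fin n → ℤ) → Fin n → ℤ) :
    (Fin n → ℤ) → Fin n → ℤ :=
  fun x i => if i = i0 then
      (if F x i0 < c then c else if d < F x i0 then d else F x i0)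
    else F x i


/-! From a state `x` with `x₁ ∈ Y = [c, d]`, the clamped target `max c (min d (f₁ x))` lies in `Y`
and on the same side of `x₁` as `f₁ x`. So a transition of `Γ(F̃)` out of such a state is a
transition of `Γ(F)` that keeps the first coordinate in `Y`, and `Ā` inherits the trap property
from `A`. Since the state space is finite, the trap domain `Ā` contains a minimal one. -/

section Clamp

variable {c d x f : ℤ}

lemma sign_clamp_sub (hx : c ≤ x ∧ x ≤ d) (hne : max c (min d f) ≠ x) :
    (max c (min d f) - x).sign = (f - x).sign := by
  rcases lt_or_gt_of_ne hne with hlt | hgt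
  · rw [Int.sign_eq_neg_one_of_neg (by omega), Int.sign_eq_neg_one_of_neg (by omega)]
  · rw [Int.sign_eq_one_of_pos (by omega), Int.sign_eq_one_of_pos (by omega)]

lemma add_sign_clamp_sub_mem (hx : c ≤ x ∧ x ≤ d) :
    c ≤ x + (max c (min d f) - x).sign ∧ x + (max c (min d f) - x).sign ≤ d := by
  rcases lt_trichotomy (max c (min d f) - x) 0 with h | h | h
  · rw [Int.sign_eq_neg_one_of_neg h]; omega
  · rw [h, Int.sign_zero]; omega
  · rw [Int.sign_eq_one_of_pos h]; omega

end Clamp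

section Dynamics

variable {n : ℕ} {a b : Fin n → ℤ} {F : (Fin n → ℤ) → Fin n → ℤ} {i₀ : Fin n} {c d : ℤ}

lemma clampFirst_apply_self (hcd : c ≤ d) (x : Fin n → ℤ) :
    clampFirst i₀ c d F x i₀ = max c (min d (F x i₀)) := by
  simp only [clampFirst, if_true]
  split_ifs <;> omega

lemma clampFirst_apply_of_ne {i : Fin n} (hi : i ≠ i₀) (x : Fin n → ℤ) :
    clampFirst i₀ c d F x i = F x i :=
  if_neg hi

lemma Async.of_clampFirst {x y : Fin n → ℤ} (hx : c ≤ x i₀ ∧ x i₀ ≤ d)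
    (h : Async (clampFirst i₀ c d F) x y) : Async F x y ∧ c ≤ y i₀ ∧ y i₀ ≤ d := by
  obtain ⟨i, hmove, rfl⟩ := h
  by_cases hi : i = i₀
  · subst hi
    rw [clampFirst_apply_self (hx.1.trans hx.2)] at hmove ⊢
    refine ⟨⟨i, fun hfix => hmove (by rw [hfix]; omega), by rw [sign_clamp_sub hx hmove]⟩, ?_⟩
    simpa only [Function.update_self] using add_sign_clamp_sub_mem hx
  · rw [clampFirst_apply_of_ne hi] at hmove ⊢
    simpa only [Function.update_of_ne (Ne.symm hi)] using ⟨⟨i, hmove, rfl⟩, hx⟩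

lemma IsTrapDomain.sep_clampFirst {A : Set (Fin n → ℤ)} (hA : IsTrapDomain a b F A)
    {z : Fin n → ℤ} (hz : z ∈ A) (hz₀ : c ≤ z i₀ ∧ z i₀ ≤ d) :
    IsTrapDomain a b (clampFirst i₀ c d F) {x ∈ A | c ≤ x i₀ ∧ x i₀ ≤ d} := by
  refine ⟨⟨z, hz, hz₀⟩, fun x hx => hA.2.1 hx.1, ?_⟩
  rintro x ⟨hxA, hx⟩ y hxy
  obtain ⟨hxy, hy⟩ := hxy.of_clampFirst hx
  exact ⟨hA.2.2 x hxA y hxy, hy⟩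

lemma stateSpace_finite (a b : Fin n → ℤ) : (StateSpace a b).Finite :=
  (Set.Finite.pi fun i => Set.finite_Icc (a i) (b i)).subset
    fun _ hx i _ => hx i

lemma IsTrapDomain.exists_isAttractor_subset {T : Set (Fin n → ℤ)}
    (hT : IsTrapDomain a b F T) : ∃ A, IsAttractor a b F A ∧ A ⊆ T := by
  have hfin : {B | IsTrapDomain a b F B ∧ B ⊆ T}.Finite :=
    ((stateSpace_finite a b).subset hT.2.1).finite_subsets.subset fun B hB => hB.2
  obtain ⟨A, -, ⟨hA, hAT⟩, hmin⟩ := hfin.exists_le_minimal ⟨hT, subset_rfl⟩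
  exact ⟨A, ⟨hA, fun B hB hBA => hBA.antisymm (hmin ⟨hB, hBA.trans hAT⟩ hBA)⟩, hAT⟩

end Dynamics

theorem stmt16_general {n : ℕ} (hn : 0 < n) (a b : Fin n → ℤ)
    (F : (Fin n → ℤ) → Fin n → ℤ)
    (c d : ℤ)
    (A : Set (Fin n → ℤ)) (hA : IsAttractor a b F A)
    (z : Fin n → ℤ) (hz : z ∈ A) (hz1 : c ≤ z ⟨0, hn⟩ ∧ z ⟨0, hn⟩ ≤ d) :
    IsTrapDomain a b (clampFirst ⟨0, hn⟩ c d F)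
        {x ∈ A | c ≤ x ⟨0, hn⟩ ∧ x ⟨0, hn⟩ ≤ d} ∧
    ∃ A', IsAttractor a b (clampFirst ⟨0, hn⟩ c d F) A' ∧ A' ⊆ A := by
  have hTrap := hA.1.sep_clampFirst hz hz1
  obtain ⟨A', hA', hA'sub⟩ := hTrap.exists_isAttractor_subset
  exact ⟨hTrap, A', hA', hA'sub.trans (Set.sep_subset _ _)⟩

/-- If `A` is an attractor of `Γ(F)` containing a point `z` with `z_1 ∈ Y`,
then `Ā = {x ∈ A | x_1 ∈ Y}` is a trap domain of `Γ(F̃)`; in particular `A`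
contains an attractor of `Γ(F̃)`. -/
theorem stmt16 {n : ℕ} (hn : 0 < n) (a b : Fin n → ℤ) (hab : ∀ i, a i + 1 ≤ b i)
    (F : (Fin n → ℤ) → Fin n → ℤ)
    (hF : ∀ x ∈ StateSpace a b, F x ∈ StateSpace a b)
    (c d : ℤ) (hc : a ⟨0, hn⟩ ≤ c) (hcd : c ≤ d) (hd : d ≤ b ⟨0, hn⟩)
    (A : Set (Fin n → ℤ)) (hA : IsAttractor a b F A)
    (z : Fin n → ℤ) (hz : z ∈ A) (hz1 : c ≤ z ⟨0, hn⟩ ∧ z ⟨0, hn⟩ ≤ d) :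
    IsTrapDomain a b (clampFirst ⟨0, hn⟩ c d F)
        {x ∈ A | c ≤ x ⟨0, hn⟩ ∧ x ⟨0, hn⟩ ≤ d} ∧
    ∃ A', IsAttractor a b (clampFirst ⟨0, hn⟩ c d F) A' ∧ A' ⊆ A :=
  stmt16_general hn a b F c d A hA z hz hz1
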